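/- arXiv:2602.24279 — 2 statements merged into one kernel-verified Lean document; each statement's English description precedes it below -/
import Mathlib

section
/- Every nonempty smooth property P has a generic string (one that is simultaneously LR-generic and RL-generic) for a fixed 2DFA M. -/
/-- A two-way deterministic finite automaton: `step q a = (q', d)` where `d = true`
means the head moves right and `d = false` means it moves left. -/
structure TDFA (Q A : Type) where
  step : Q → A → Q × Bool
  start : Q
  accept : Q

namespace TDFA

variable {Q A : Type}

/-- One step of `M` on string `w`. A configuration is a pair (state, position),
with positions `1, …, w.length` on the symbols of `w`, position `0` meaning the
computation has fallen off the left end and `w.length + 1` off the right end. -/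
def Step (M : TDFA Q A) (w : List A) (c c' : Q × ℕ) : Prop :=
  ∃ a, w[c.2 - 1]? = some a ∧ 1 ≤ c.2 ∧
    c' = ((M.step c.1 a).1, if (M.step c.1 a).2 then c.2 + 1 else c.2 - 1)

/-- The computation of `M` on `w` started in state `p` at position `j`
hits right into state `q`. -/
def ReachesRight (M : TDFA Q A) (w : List A) (p : Q) (j : ℕ) (q : Q) : Prop :=
  Relation.ReflTransGen (M.Step w) (p, j) (q, w.length + 1)

/-- The computation of `M` on `w` started in state `p` at position `j`
hits left into state `q`. -/
def ReachesLeft (M : TDFA Q A) (w : List A) (p : Q) (j : ℕ) (q : Q) : Prop :=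
  Relation.ReflTransGen (M.Step w) (p, j) (q, 0)

/-- `Q_LR(w)`: states hit right by left computations of `M` on `w`. -/
def QLR (M : TDFA Q A) (w : List A) : Set Q := {q | ∃ p, M.ReachesRight w p 1 q}

/-- `Q_RL(w)`: states hit left by right computations of `M` on `w`. -/
def QRL (M : TDFA Q A) (w : List A) : Set Q := {q | ∃ p, M.ReachesLeft w p w.length q}

end TDFA

/-- `P` is smooth: any two of its strings admit a connecting infix in `P`. -/
def SmoothProp {A : Type} (P : Set (List A)) : Prop :=
  ∀ x ∈ P, ∀ z ∈ P, ∃ y : List A, x ++ y ++ z ∈ P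

/-- `y` is LR-generic for `P`. -/
def LRGeneric {Q A : Type} (M : TDFA Q A) (P : Set (List A)) (y : List A) : Prop :=
  y ∈ P ∧ ∀ z : List A, y ++ z ∈ P → (M.QLR y).ncard = (M.QLR (y ++ z)).ncard

/-- `y` is RL-generic for `P`. -/
def RLGeneric {Q A : Type} (M : TDFA Q A) (P : Set (List A)) (y : List A) : Prop :=
  y ∈ P ∧ ∀ z : List A, z ++ y ∈ P → (M.QRL y).ncard = (M.QRL (z ++ y)).ncard

/-!
Appending to the right can only shrink `Q_LR`: a left computation on `y ++ z` that hits right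
first hits the right end of `y`, and by determinism the state it enters `z` in determines the
state it leaves in, so `|Q_LR (y ++ z)| ≤ |Q_LR y|`; mirroring the automaton gives the dual
`|Q_RL (z ++ y)| ≤ |Q_RL y|`. Hence if `y₁ ∈ P` minimises `|Q_LR|` and `y₂ ∈ P` minimises
`|Q_RL|` over `P`, then any `y₁ ++ w ++ y₂ ∈ P` given by smoothness is generic: its
cardinalities are squeezed between the minima and the values at its extensions in `P`.
-/

theorem Relation.ReflTransGen.eq_of_rightUnique {α : Type*} {r : α → α → Prop}
    (hr : Relator.RightUnique r) {a b c : α} (hb : ∀ x, ¬ r b x) (hc : ∀ x, ¬ r c x)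
    (hab : ReflTransGen r a b) (hac : ReflTransGen r a c) : b = c := by
  rcases total_of_right_unique hr hab hac with h | h
  · rcases h.cases_head with h | ⟨x, hx, -⟩
    exacts [h, (hb x hx).elim]
  · rcases h.cases_head with h | ⟨x, hx, -⟩
    exacts [h.symm, (hc x hx).elim]

theorem Set.ncard_le_ncard_of_rightUnique {α β : Type*} {s : Set α} {t : Set β}
    {R : α → β → Prop} (hR : Relator.RightUnique R) (hs : s.Finite)
    (h : ∀ b ∈ t, ∃ a ∈ s, R a b) : t.ncard ≤ s.ncard := by
  rcases t.eq_empty_or_nonempty with rfl | ⟨b, hb⟩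
  · simp
  have : Nonempty α := let ⟨a, _⟩ := h b hb; ⟨a⟩
  choose! g hgs hgR using h
  exact ncard_le_ncard_of_injOn g hgs
    (fun b hb b' hb' e => hR (hgR b hb) (e ▸ hgR b' hb')) hs

namespace TDFA

variable {Q A : Type} {M : TDFA Q A} {w y z : List A} {c c' : Q × ℕ}

theorem step_rightUnique : Relator.RightUnique (M.Step w) := by
  rintro c - - ⟨a, ha, -, rfl⟩ ⟨b, hb, -, rfl⟩
  cases ha.symm.trans hb
  rfl

theorem Step.pos_le (h : M.Step w c c') : 1 ≤ c.2 ∧ c.2 ≤ w.length := by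
  obtain ⟨a, ha, h1, -⟩ := h
  exact ⟨h1, by have := (List.getElem?_eq_some_iff.1 ha).1; omega⟩

theorem Step.snd_le_succ (h : M.Step w c c') : c'.2 ≤ c.2 + 1 := by
  obtain ⟨a, -, -, rfl⟩ := h
  split <;> omega

theorem not_step_length_add_one (q : Q) : ¬ M.Step w (q, w.length + 1) c' :=
  fun h => by simpa using h.pos_le.2

theorem reachesRight_rightUnique (j : ℕ) :
    Relator.RightUnique fun p q => M.ReachesRight w p j q :=
  fun _ _ _ h h' => congrArg Prod.fst <|
    Relation.ReflTransGen.eq_of_rightUnique step_rightUnique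
      (fun _ => not_step_length_add_one _) (fun _ => not_step_length_add_one _) h h'

theorem Step.of_append (h : M.Step (y ++ z) c c') (hc : c.2 ≤ y.length) : M.Step y c c' := by
  obtain ⟨a, ha, h1, rfl⟩ := h
  exact ⟨a, by rwa [List.getElem?_append_left (by omega)] at ha, h1, rfl⟩

theorem exists_reachesRight_of_append {q' : Q}
    (h : Relation.ReflTransGen (M.Step (y ++ z)) c (q', (y ++ z).length + 1))
    (hc : c.2 ≤ y.length + 1) :
    ∃ q, Relation.ReflTransGen (M.Step y) c (q, y.length + 1) ∧
      M.ReachesRight (y ++ z) q (y.length + 1) q' := by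
  induction h using Relation.ReflTransGen.head_induction_on with
  | refl =>
    have hz : (y ++ z).length = y.length := by simp only [List.length_append] at hc ⊢; omega
    exact ⟨q', by rw [hz], by rw [ReachesRight, hz]⟩
  | @head c _ hstep hrest ih =>
    rcases hc.eq_or_lt with hc | hc
    · obtain ⟨p, j⟩ := c
      obtain rfl : j = y.length + 1 := hc
      exact ⟨p, .refl, .head hstep hrest⟩
    · obtain ⟨q, hyq, hq⟩ := ih (hstep.snd_le_succ.trans (by omega))
      exact ⟨q, .head (hstep.of_append (by omega)) hyq, hq⟩

theorem ncard_QLR_append_le [Finite Q] (M : TDFA Q A) (y z : List A) :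
    (M.QLR (y ++ z)).ncard ≤ (M.QLR y).ncard := by
  refine Set.ncard_le_ncard_of_rightUnique
    (reachesRight_rightUnique (M := M) (w := y ++ z) (y.length + 1)) (Set.toFinite _)
    fun q' ⟨p, hp⟩ => ?_
  obtain ⟨q, hyq, hq⟩ := exists_reachesRight_of_append hp (by omega)
  exact ⟨q, ⟨p, hyq⟩, hq⟩

def reverse (M : TDFA Q A) : TDFA Q A where
  step q a := ((M.step q a).1, !(M.step q a).2)
  start := M.start
  accept := M.accept

theorem reverse_reverse (M : TDFA Q A) : M.reverse.reverse = M := by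
  cases M
  simp [reverse]

theorem Step.reverse (h : M.Step w c c') :
    M.reverse.Step w.reverse (c.1, w.length + 1 - c.2) (c'.1, w.length + 1 - c'.2) := by
  obtain ⟨h1, hn⟩ := h.pos_le
  obtain ⟨a, ha, -, rfl⟩ := h
  refine ⟨a, ?_, by omega, ?_⟩
  · rw [List.getElem?_reverse (by omega)]
    convert ha using 2
    omega
  · simp only [reverse, Prod.mk.injEq, true_and]
    split_ifs <;> simp_all <;> omega

theorem reflTransGen_step_reverse (h : Relation.ReflTransGen (M.Step w) c c') :
    Relation.ReflTransGen (M.reverse.Step w.reverse)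
      (c.1, w.length + 1 - c.2) (c'.1, w.length + 1 - c'.2) :=
  Relation.ReflTransGen.lift (fun c : Q × ℕ => (c.1, w.length + 1 - c.2))
    (fun _ _ => Step.reverse) _ _ h

theorem reachesLeft_iff_reverse {p q : Q} :
    M.ReachesLeft w p w.length q ↔ M.reverse.ReachesRight w.reverse p 1 q := by
  constructor
  · intro h
    simpa [ReachesRight] using reflTransGen_step_reverse h
  · intro h
    simpa [ReachesLeft, reverse_reverse] using reflTransGen_step_reverse h

theorem QRL_eq_QLR_reverse (M : TDFA Q A) (w : List A) :
    M.QRL w = M.reverse.QLR w.reverse := by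
  ext q
  exact exists_congr fun p => reachesLeft_iff_reverse

theorem ncard_QRL_append_le [Finite Q] (M : TDFA Q A) (z y : List A) :
    (M.QRL (z ++ y)).ncard ≤ (M.QRL y).ncard := by
  simpa only [QRL_eq_QLR_reverse, List.reverse_append] using
    ncard_QLR_append_le M.reverse y.reverse z.reverse

end TDFA

section Generic

variable {Q A : Type} [Finite Q] {M : TDFA Q A} {P : Set (List A)} {y w : List A}

theorem lrGeneric_append_of_le
    (hy : ∀ y' ∈ P, (M.QLR y).ncard ≤ (M.QLR y').ncard) (hw : y ++ w ∈ P) :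
    LRGeneric M P (y ++ w) := by
  refine ⟨hw, fun z hz => le_antisymm ?_ (M.ncard_QLR_append_le _ z)⟩
  calc (M.QLR (y ++ w)).ncard ≤ (M.QLR y).ncard := M.ncard_QLR_append_le y w
    _ ≤ (M.QLR (y ++ w ++ z)).ncard := hy _ hz

theorem rlGeneric_append_of_le
    (hy : ∀ y' ∈ P, (M.QRL y).ncard ≤ (M.QRL y').ncard) (hw : w ++ y ∈ P) :
    RLGeneric M P (w ++ y) := by
  refine ⟨hw, fun z hz => le_antisymm ?_ (M.ncard_QRL_append_le z _)⟩
  calc (M.QRL (w ++ y)).ncard ≤ (M.QRL y).ncard := M.ncard_QRL_append_le w y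
    _ ≤ (M.QRL (z ++ (w ++ y))).ncard := hy _ hz

end Generic

/-- Every nonempty smooth property has a generic string
(simultaneously LR-generic and RL-generic). -/
theorem exists_generic {Q A : Type} [Fintype Q] (M : TDFA Q A)
    (P : Set (List A)) (hP : P.Nonempty) (hsm : SmoothProp P) :
    ∃ y : List A, LRGeneric M P y ∧ RLGeneric M P y := by
  have exists_min (f : List A → ℕ) : ∃ y ∈ P, ∀ y' ∈ P, f y ≤ f y' :=
    ⟨_, Function.argminOn_mem f P hP, fun _ h => Function.argminOn_le f P h⟩
  obtain ⟨y₁, hy₁P, hy₁⟩ := exists_min fun y => (M.QLR y).ncard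
  obtain ⟨y₂, hy₂P, hy₂⟩ := exists_min fun y => (M.QRL y).ncard
  obtain ⟨w, hw⟩ := hsm y₁ hy₁P y₂ hy₂P
  refine ⟨y₁ ++ w ++ y₂, ?_, rlGeneric_append_of_le hy₂ hw⟩
  rw [List.append_assoc] at hw ⊢
  exact lrGeneric_append_of_le hy₁ hw
end

section
/- If P and P' are nonempty smooth properties and P has suffix of choice into P', then both a(P) ≥ a(P') and b(P) ≥ b(P'), where a(·), b(·) are the LR- and RL-sizes. -/
/-!
A computation on `z ++ w` that hits right must enter `w` at its left end for the last time, and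
from then on it is a left computation on `w`; hence `Q_LR(z ++ w) ⊆ Q_LR(w)`, and symmetrically
`Q_RL(v ++ w) ⊆ Q_RL(v)`. Suffix of choice puts `g' ++ u ++ g` into `P'`, so by genericity of `g'`
we get `a(P') = |Q_LR(g' ++ u ++ g)| ≤ a(P)`. Likewise `r ++ u ++ r ∈ P'`, which smoothness of `P'`
extends to a string `r ++ x ++ r' ∈ P'`, and genericity of `r'` gives `b(P') ≤ b(P)`.
-/

namespace TDFA

variable {Q A : Type} {M : TDFA Q A}

theorem Step.one_le_and_adjacent {w : List A} {c c' : Q × ℕ} (h : M.Step w c c') :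
    1 ≤ c.2 ∧ (c'.2 = c.2 + 1 ∨ c'.2 + 1 = c.2) := by
  obtain ⟨a, -, hc, rfl⟩ := h
  refine ⟨hc, ?_⟩
  cases (M.step c.1 a).2 <;> simp; omega

theorem Step.of_append_left {v w : List A} {c c' : Q × ℕ} (h : M.Step (v ++ w) c c')
    (hc : c.2 ≤ v.length) : M.Step v c c' := by
  obtain ⟨a, ha, hc1, rfl⟩ := h
  exact ⟨a, by rwa [List.getElem?_append_left (by omega)] at ha, hc1, rfl⟩

theorem Step.of_append_right {z w : List A} {c c' : Q × ℕ} (h : M.Step (z ++ w) c c')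
    (hc : z.length < c.2) : M.Step w (c.1, c.2 - z.length) (c'.1, c'.2 - z.length) := by
  obtain ⟨a, ha, -, rfl⟩ := h
  refine ⟨a, ?_, by simp; omega, ?_⟩
  · rw [List.getElem?_append_right (by omega)] at ha
    simpa [Nat.sub_right_comm] using ha
  · cases (M.step c.1 a).2 <;> simp <;> omega

theorem reachesLeft_append_or {v w : List A} {c : Q × ℕ} {q : Q}
    (h : Relation.ReflTransGen (M.Step (v ++ w)) c (q, 0)) :
    q ∈ M.QRL v ∨ (c.2 ≤ v.length ∧ Relation.ReflTransGen (M.Step v) c (q, 0)) := by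
  induction h using Relation.ReflTransGen.head_induction_on with
  | refl => exact Or.inr ⟨Nat.zero_le _, .refl⟩
  | @head c c₁ hstep _ ih =>
    obtain hq | ⟨hc₁, hpath⟩ := ih
    · exact Or.inl hq
    obtain ⟨-, hadj⟩ := hstep.one_le_and_adjacent
    by_cases hc : c.2 ≤ v.length
    · exact Or.inr ⟨hc, .head (hstep.of_append_left hc) hpath⟩
    · -- the step from position `|v| + 1` into `v` starts a right computation on `v`
      have hc₁_eq : c₁.2 = v.length := by omega
      exact Or.inl ⟨c₁.1, by rw [← hc₁_eq]; exact hpath⟩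

theorem reachesRight_append_or {z w : List A} {c : Q × ℕ} {q : Q}
    (h : Relation.ReflTransGen (M.Step (z ++ w)) c (q, (z ++ w).length + 1)) :
    q ∈ M.QLR w ∨ (z.length < c.2 ∧
      Relation.ReflTransGen (M.Step w) (c.1, c.2 - z.length) (q, w.length + 1)) := by
  induction h using Relation.ReflTransGen.head_induction_on with
  | refl =>
    refine Or.inr ⟨by simp, ?_⟩
    rw [List.length_append, Nat.add_assoc, Nat.add_sub_cancel_left]
  | @head c c₁ hstep _ ih =>
    obtain hq | ⟨hc₁, hpath⟩ := ih
    · exact Or.inl hq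
    obtain ⟨hc1, hadj⟩ := hstep.one_le_and_adjacent
    by_cases hc : z.length < c.2
    · exact Or.inr ⟨hc, .head (hstep.of_append_right hc) hpath⟩
    · -- the step from position `|z|` into `w` starts a left computation on `w`
      have hc₁_eq : c₁.2 - z.length = 1 := by omega
      exact Or.inl ⟨c₁.1, by rw [← hc₁_eq]; exact hpath⟩

theorem QRL_append_subset (v w : List A) : M.QRL (v ++ w) ⊆ M.QRL v := by
  rintro q ⟨p, h⟩
  obtain hq | ⟨hle, hpath⟩ := reachesLeft_append_or h
  · exact hq
  · have hlen : (v ++ w).length = v.length := le_antisymm hle (by simp)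
    exact ⟨p, by rw [← hlen]; exact hpath⟩

theorem QLR_append_subset (z w : List A) : M.QLR (z ++ w) ⊆ M.QLR w := by
  rintro q ⟨p, h⟩
  obtain hq | ⟨hlt, hpath⟩ := reachesRight_append_or h
  · exact hq
  · have hz : z.length = 0 := by simpa using hlt
    exact ⟨p, by rwa [hz] at hpath⟩

end TDFA

variable {Q A : Type} [Finite Q] {M : TDFA Q A} {P : Set (List A)}

theorem LRGeneric.ncard_QLR_le {g x w : List A} (hg : LRGeneric M P g)
    (hmem : g ++ x ++ w ∈ P) : (M.QLR g).ncard ≤ (M.QLR w).ncard := by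
  rw [hg.2 (x ++ w) (by simpa using hmem), ← List.append_assoc]
  exact Set.ncard_le_ncard (M.QLR_append_subset _ _) (Set.toFinite _)

theorem RLGeneric.ncard_QRL_le {r x w : List A} (hr : RLGeneric M P r)
    (hmem : w ++ x ++ r ∈ P) : (M.QRL r).ncard ≤ (M.QRL w).ncard := by
  rw [hr.2 (w ++ x) hmem, List.append_assoc]
  exact Set.ncard_le_ncard (M.QRL_append_subset _ _) (Set.toFinite _)

theorem sizes_monotone_under_suffix_of_choice_general {Q A : Type} [Fintype Q] (M : TDFA Q A)
    (P P' : Set (List A))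
    (hsm' : SmoothProp P')
    (hsoc : ∀ v ∈ P, ∃ u : List A, ∀ x ∈ P ∪ P', x ++ u ++ v ∈ P')
    (g g' r r' : List A)
    (hg : LRGeneric M P g) (hg' : LRGeneric M P' g')
    (hr : RLGeneric M P r) (hr' : RLGeneric M P' r') :
    (M.QLR g).ncard ≥ (M.QLR g').ncard ∧ (M.QRL r).ncard ≥ (M.QRL r').ncard := by
  constructor
  · obtain ⟨u, hu⟩ := hsoc g hg.1
    exact hg'.ncard_QLR_le (hu g' (Or.inr hg'.1))
  · obtain ⟨u, hu⟩ := hsoc r hr.1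
    obtain ⟨y, hy⟩ := hsm' _ (hu r (Or.inl hr.1)) r' hr'.1
    exact hr'.ncard_QRL_le (x := u ++ r ++ y) (by simpa using hy)

/-- If smooth nonempty `P` has suffix of choice into smooth nonempty `P'`, then
`a(P) ≥ a(P')` and `b(P) ≥ b(P')`, stated via arbitrary LR-generic strings `g, g'`
and RL-generic strings `r, r'` of `P` and `P'` respectively. -/
theorem sizes_monotone_under_suffix_of_choice {Q A : Type} [Fintype Q] (M : TDFA Q A)
    (P P' : Set (List A)) (hP : P.Nonempty) (hP' : P'.Nonempty)
    (hsm : SmoothProp P) (hsm' : SmoothProp P')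
    (hsoc : ∀ v ∈ P, ∃ u : List A, ∀ x ∈ P ∪ P', x ++ u ++ v ∈ P')
    (g g' r r' : List A)
    (hg : LRGeneric M P g) (hg' : LRGeneric M P' g')
    (hr : RLGeneric M P r) (hr' : RLGeneric M P' r') :
    (M.QLR g).ncard ≥ (M.QLR g').ncard ∧ (M.QRL r).ncard ≥ (M.QRL r').ncard :=
  sizes_monotone_under_suffix_of_choice_general M P P' hsm' hsoc g g' r r' hg hg' hr hr'
end
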